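/- Let X and Z be finite nonempty types, let p : X × Z → ℝ be a strictly positive joint probability mass function with marginals p_X, p_Z and conditionals p(z|x) = p(x,z)/p_X(x), p(x|z) = p(x,z)/p_Z(z). Fix N ≥ 1. Define the density-ratio critic f(x,z) = p(x|z)/p_X(x), and define the InfoNCE loss with N samples as the expectation L_N = ∑_{z ∈ Z} ∑_{(x₁,…,x_N) ∈ X^N} p(x₁,z) · (∏_{j=2}^{N} p_X(x_j)) · ( − log( f(x₁,z) / ∑_{j=1}^{N} f(x_j,z) ) ), i.e., the expected negative log-probability of identifying the positive sample x₁ (drawn jointly with z) among N−1 independent negatives drawn from the marginal p_X. Then the mutual information I(X;Z) = ∑_{x,z} p(x,z) log( p(x,z)/(p_X(x) p_Z(z)) ) satisfies I(X;Z) ≥ log N − L_N. -/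

import Mathlib

/-!
Fix a context `z` and write `q = p_X`, `g = f(·, z)`, so that `q g = p(·|z)` and `∑ q g = 1`.
For samples `x₁, …, x_N` drawn i.i.d. from `q`, `S = ∑ⱼ g(xⱼ)` and `L_z` the loss at `z`, one has
`KL(p(·|z) ‖ p_X) + L_z - log N = E[g(x₁) log (S/N)]`. The product weight and `S` are symmetric in
the samples, so `g(x₁)` may be replaced by its average `S/N`, a density of mean one, and then
`u log u ≥ u - 1` makes `E[(S/N) log (S/N)]` nonnegative. Averaging over `z` gives the theorem.
-/

open Finset

section
variable {ι X R : Type*} [Fintype ι] [DecidableEq ι] [Fintype X] [CommSemiring R]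

theorem sum_pi_apply_mul_prod_erase (k : ι) (h q : X → R) (hq : ∑ x, q x = 1) :
    ∑ xs : ι → X, h (xs k) * ∏ j ∈ univ.erase k, q (xs j) = ∑ x, h x := by
  have hslice : ∀ xs : ι → X, ∏ j, Function.update (fun _ ↦ q) k h j (xs j)
      = h (xs k) * ∏ j ∈ univ.erase k, q (xs j) := fun xs ↦ by
    simp only [Function.apply_update (fun j (φ : X → R) ↦ φ (xs j)),
      prod_update_of_mem (mem_univ k), sdiff_singleton_eq_erase]
  have hsums : (fun j ↦ ∑ x, Function.update (fun _ ↦ q) k h j x)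
      = Function.update (fun _ ↦ 1) k (∑ x, h x) := by
    rw [← hq]
    exact funext (Function.apply_update (fun _ (φ : X → R) ↦ ∑ x, φ x) _ k h)
  calc ∑ xs : ι → X, h (xs k) * ∏ j ∈ univ.erase k, q (xs j)
      = ∑ xs : ι → X, ∏ j, Function.update (fun _ ↦ q) k h j (xs j) := by
        simp only [hslice]
    _ = ∏ j, ∑ x, Function.update (fun _ ↦ q) k h j x := (Fintype.prod_sum _).symm
    _ = ∑ x, h x := by
        rw [hsums, prod_update_of_mem (mem_univ k), prod_const_one, mul_one]

theorem sum_pi_prod_mul_apply (k : ι) (q g : X → R) (hq : ∑ x, q x = 1) :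
    ∑ xs : ι → X, (∏ j, q (xs j)) * g (xs k) = ∑ x, q x * g x := by
  rw [← sum_pi_apply_mul_prod_erase k (fun x ↦ q x * g x) q hq]
  refine sum_congr rfl fun xs _ ↦ ?_
  rw [← mul_prod_erase univ (fun j ↦ q (xs j)) (mem_univ k)]
  ring

theorem sum_pi_prod_mul_apply_mul_eq (k l : ι) (q g : X → R) (φ : R → R) :
    ∑ xs : ι → X, (∏ j, q (xs j)) * (g (xs k) * φ (∑ j, g (xs j)))
      = ∑ xs : ι → X, (∏ j, q (xs j)) * (g (xs l) * φ (∑ j, g (xs j))) := by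
  refine Fintype.sum_equiv ((Equiv.swap k l).arrowCongr (Equiv.refl X)) _ _ fun xs ↦ ?_
  simp only [Equiv.arrowCongr_apply, Equiv.symm_swap, Equiv.refl_apply, Function.comp_apply,
    Equiv.swap_apply_right, Equiv.prod_comp (Equiv.swap k l) fun j ↦ q (xs j),
    Equiv.sum_comp (Equiv.swap k l) fun j ↦ g (xs j)]

theorem card_mul_sum_pi_prod_mul_apply_mul (k : ι) (q g : X → R) (φ : R → R) :
    Fintype.card ι * ∑ xs : ι → X, (∏ j, q (xs j)) * (g (xs k) * φ (∑ j, g (xs j)))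
      = ∑ xs : ι → X, (∏ j, q (xs j)) * ((∑ j, g (xs j)) * φ (∑ j, g (xs j))) := by
  calc Fintype.card ι * ∑ xs : ι → X, (∏ j, q (xs j)) * (g (xs k) * φ (∑ j, g (xs j)))
      = ∑ l : ι, ∑ xs : ι → X, (∏ j, q (xs j)) * (g (xs l) * φ (∑ j, g (xs j))) := by
        simp only [← sum_pi_prod_mul_apply_mul_eq k, sum_const, card_univ, nsmul_eq_mul]
    _ = _ := by
        rw [sum_comm]
        simp only [← mul_sum, ← sum_mul]

theorem sum_mul_mul_log_nonneg {α : Type*} {s : Finset α} {w u : α → ℝ}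
    (hw : ∀ i ∈ s, 0 ≤ w i) (hu : ∀ i ∈ s, 0 ≤ u i)
    (hmean : ∑ i ∈ s, w i * u i = ∑ i ∈ s, w i) :
    0 ≤ ∑ i ∈ s, w i * (u i * Real.log (u i)) :=
  calc 0 = ∑ i ∈ s, w i * (u i - 1) := by simp [mul_sub, sum_sub_distrib, hmean]
    _ ≤ _ := sum_le_sum fun i hi ↦
      mul_le_mul_of_nonneg_left (Real.self_sub_one_le_mul_log (hu i hi)) (hw i hi)

theorem sum_pi_prod_mul_apply_mul_log_sum_div_card_nonneg (k : ι) {q g : X → ℝ}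
    (hq0 : ∀ x, 0 ≤ q x) (hq : ∑ x, q x = 1) (hg : ∀ x, 0 ≤ g x)
    (hqg : ∑ x, q x * g x = 1) :
    0 ≤ ∑ xs : ι → X,
      (∏ j, q (xs j)) * (g (xs k) * Real.log ((∑ j, g (xs j)) / Fintype.card ι)) := by
  set n : ℝ := (Fintype.card ι : ℝ)
  have hn : 0 < n := Nat.cast_pos.2 (Fintype.card_pos_iff.2 ⟨k⟩)
  have hmass : ∑ xs : ι → X, ∏ j, q (xs j) = 1 := by
    simp [← Fintype.prod_sum, hq]
  have hmean : ∑ xs : ι → X, (∏ j, q (xs j)) * (∑ j, g (xs j)) = n := by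
    simp only [mul_sum]
    rw [sum_comm]
    simp [sum_pi_prod_mul_apply _ q g hq, hqg, n]
  rw [← mul_nonneg_iff_of_pos_left hn,
    card_mul_sum_pi_prod_mul_apply_mul k q g fun t ↦ Real.log (t / n)]
  calc 0 ≤ n * ∑ xs : ι → X, (∏ j, q (xs j)) *
          ((∑ j, g (xs j)) / n * Real.log ((∑ j, g (xs j)) / n)) := by
        refine mul_nonneg hn.le (sum_mul_mul_log_nonneg
          (fun xs _ ↦ prod_nonneg fun j _ ↦ hq0 (xs j))
          (fun xs _ ↦ div_nonneg (sum_nonneg fun j _ ↦ hg (xs j)) hn.le) ?_)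
        simp only [mul_div_assoc', ← sum_div, hmean, hmass, div_self hn.ne']
    _ = _ := by
        rw [mul_sum]
        exact sum_congr rfl fun xs _ ↦ by field_simp

theorem log_card_sub_infoNCE_le (k : ι) {q g : X → ℝ}
    (hq0 : ∀ x, 0 ≤ q x) (hq : ∑ x, q x = 1) (hg : ∀ x, 0 < g x)
    (hqg : ∑ x, q x * g x = 1) :
    Real.log (Fintype.card ι) - ∑ xs : ι → X, q (xs k) * g (xs k) *
        (∏ j ∈ univ.erase k, q (xs j)) * (-Real.log (g (xs k) / ∑ j, g (xs j)))
      ≤ ∑ x, q x * g x * Real.log (g x) := by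
  set n : ℝ := (Fintype.card ι : ℝ)
  have hn : 0 < n := Nat.cast_pos.2 (Fintype.card_pos_iff.2 ⟨k⟩)
  have hS : ∀ xs : ι → X, 0 < ∑ j, g (xs j) := fun xs ↦ sum_pos (fun j _ ↦ hg _) ⟨k, mem_univ k⟩
  have hlog : Real.log n =
      ∑ xs : ι → X, q (xs k) * g (xs k) * (∏ j ∈ univ.erase k, q (xs j)) * Real.log n := by
    rw [← sum_mul, sum_pi_apply_mul_prod_erase k (fun x ↦ q x * g x) q hq, hqg, one_mul]
  rw [← sub_nonneg, hlog,
    ← sum_pi_apply_mul_prod_erase k (fun x ↦ q x * g x * Real.log (g x)) q hq,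
    ← sum_sub_distrib, ← sum_sub_distrib]
  convert sum_pi_prod_mul_apply_mul_log_sum_div_card_nonneg k hq0 hq (fun x ↦ (hg x).le) hqg
    using 2 with xs
  rw [Real.log_div (hg _).ne' (hS xs).ne', Real.log_div (hS xs).ne' hn.ne',
    ← mul_prod_erase univ (fun j ↦ q (xs j)) (mem_univ k)]
  ring

theorem log_card_sub_infoNCE_le_sum_sum_mul_log {Z : Type*} [Fintype Z] (k : ι)
    {p : X × Z → ℝ} {pX : X → ℝ} {pZ : Z → ℝ} {f : X → Z → ℝ}
    (hpX0 : ∀ x, 0 ≤ pX x) (hpX : ∑ x, pX x = 1) (hpZ0 : ∀ z, 0 ≤ pZ z) (hpZ : ∑ z, pZ z = 1)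
    (hf : ∀ x z, 0 < f x z) (hf_mean : ∀ z, ∑ x, pX x * f x z = 1)
    (hp : ∀ x z, p (x, z) = pZ z * (pX x * f x z)) :
    Real.log (Fintype.card ι) - ∑ z, ∑ xs : ι → X, p (xs k, z) *
        (∏ j ∈ univ.erase k, pX (xs j)) * (-Real.log (f (xs k) z / ∑ j, f (xs j) z))
      ≤ ∑ x, ∑ z, p (x, z) * Real.log (f x z) := by
  have hjoint : ∑ x, ∑ z, p (x, z) * Real.log (f x z)
      = ∑ z, pZ z * ∑ x, pX x * f x z * Real.log (f x z) := by
    rw [sum_comm]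
    simp only [hp, mul_sum, mul_assoc]
  have hloss : ∀ z, ∑ xs : ι → X, p (xs k, z) * (∏ j ∈ univ.erase k, pX (xs j)) *
        (-Real.log (f (xs k) z / ∑ j, f (xs j) z))
      = pZ z * ∑ xs : ι → X, pX (xs k) * f (xs k) z * (∏ j ∈ univ.erase k, pX (xs j)) *
        (-Real.log (f (xs k) z / ∑ j, f (xs j) z)) := fun z ↦ by
    simp only [hp, mul_sum, mul_assoc]
  rw [hjoint, sum_congr rfl fun z _ ↦ hloss z]
  refine Eq.trans_le ?_ (sum_le_sum fun z _ ↦ mul_le_mul_of_nonneg_left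
    (log_card_sub_infoNCE_le k hpX0 hpX (hf · z) (hf_mean z)) (hpZ0 z))
  simp only [mul_sub, sum_sub_distrib, ← sum_mul, hpZ, one_mul]

end

/-- (van den Oord et al.) For a strictly positive joint pmf `p` on
`X × Z`, the InfoNCE loss `L` with `N` samples and density-ratio critic
`f x z = p(x|z) / p_X(x)` lower-bounds the mutual information:
`I(X;Z) ≥ log N − L`. -/
theorem mutualInformation_ge_log_sub_infoNCE
    {X Z : Type*} [Fintype X] [Fintype Z] [Nonempty X] [Nonempty Z]
    (p : X × Z → ℝ)
    (hpos : ∀ x z, 0 < p (x, z))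
    (hsum : ∑ x : X, ∑ z : Z, p (x, z) = 1)
    (N : ℕ) (hN : 1 ≤ N)
    (f : X → Z → ℝ)
    (hf : ∀ x z, f x z = (p (x, z) / ∑ x' : X, p (x', z)) / ∑ z' : Z, p (x, z'))
    (L : ℝ)
    (hL : L = ∑ z : Z, ∑ xs : Fin N → X,
        p (xs ⟨0, hN⟩, z) * (∏ j ∈ Finset.univ.erase (⟨0, hN⟩ : Fin N), ∑ z' : Z, p (xs j, z'))
          * (- Real.log (f (xs ⟨0, hN⟩) z / ∑ j : Fin N, f (xs j) z))) :
    ∑ x : X, ∑ z : Z,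
        p (x, z) * Real.log (p (x, z) / ((∑ z' : Z, p (x, z')) * (∑ x' : X, p (x', z))))
      ≥ Real.log N - L := by
  obtain ⟨pX, hpX⟩ : ∃ pX : X → ℝ, ∀ x, ∑ z, p (x, z) = pX x := ⟨_, fun _ ↦ rfl⟩
  obtain ⟨pZ, hpZ⟩ : ∃ pZ : Z → ℝ, ∀ z, ∑ x, p (x, z) = pZ z := ⟨_, fun _ ↦ rfl⟩
  have hpX_pos x : 0 < pX x := hpX x ▸ sum_pos (fun z _ ↦ hpos x z) univ_nonempty
  have hpZ_pos z : 0 < pZ z := hpZ z ▸ sum_pos (fun x _ ↦ hpos x z) univ_nonempty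
  have hpZ_sum : ∑ z, pZ z = 1 := by simp only [← hpZ]; rw [sum_comm]; exact hsum
  simp only [hpX, hpZ] at hsum hf hL ⊢
  have hp x z : p (x, z) = pZ z * (pX x * f x z) := by
    rw [hf]; field_simp [(hpX_pos x).ne', (hpZ_pos z).ne']
  have hf_pos x z : 0 < f x z := by
    rw [hf]; exact div_pos (div_pos (hpos x z) (hpZ_pos z)) (hpX_pos x)
  have hf_mean z : ∑ x, pX x * f x z = 1 := by
    have h x : pX x * f x z = p (x, z) / pZ z := by rw [hf]; field_simp [(hpX_pos x).ne']
    rw [sum_congr rfl fun x _ ↦ h x, ← sum_div, hpZ, div_self (hpZ_pos z).ne']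
  have hratio x z : p (x, z) / (pX x * pZ z) = f x z := by rw [hf, div_div, mul_comm]
  simp only [hratio]
  rw [ge_iff_le, hL]
  simpa only [Fintype.card_fin] using log_card_sub_infoNCE_le_sum_sum_mul_log (⟨0, hN⟩ : Fin N)
    (fun x ↦ (hpX_pos x).le) hsum (fun z ↦ (hpZ_pos z).le) hpZ_sum hf_pos hf_mean hp
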